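/- arXiv:hep-th/0410135 — 7 statements merged into one kernel-verified Lean document; each statement's English description precedes it below -/
import Mathlib

section
/- The family of n² − 1 matrices (X_{(r,s)})_{(r,s) ∈ ℤ_n × ℤ_n, (r,s) ≠ (0,0)} is a basis of sl(n,ℂ), the ℂ-subspace of n×n complex matrices of trace zero. (This gives the Pauli grading of sl(n,ℂ) into n² − 1 one-dimensional subspaces.) -/
open Matrix

/-- ω = exp(2πi/n). -/
noncomputable def om (n : ℕ) : ℂ := Complex.exp (2 * Real.pi * Complex.I / n)

/-- The diagonal matrix Q = diag(1, ω, ω², …, ω^{n-1}). -/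
noncomputable def Qm (n : ℕ) : Matrix (Fin n) (Fin n) ℂ :=
  Matrix.diagonal fun j => om n ^ (j : ℕ)

/-- The matrix P with P_{j,k} = 1 if k ≡ j + 1 (mod n) and 0 otherwise. -/
noncomputable def Pm (n : ℕ) : Matrix (Fin n) (Fin n) ℂ :=
  Matrix.of fun j k => if ((k : ℕ) : ZMod n) = ((j : ℕ) : ZMod n) + 1 then 1 else 0

/-- X_{(r,s)} = Q^r P^s for (r,s) ∈ ℤ_n × ℤ_n. -/
noncomputable def Xm (n : ℕ) (u : ZMod n × ZMod n) : Matrix (Fin n) (Fin n) ℂ :=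
  Qm n ^ u.1.val * Pm n ^ u.2.val

/-- sl(n,ℂ): the subspace of n×n complex matrices of trace zero. -/
noncomputable def slC (n : ℕ) : Submodule ℂ (Matrix (Fin n) (Fin n) ℂ) :=
  LinearMap.ker (Matrix.traceLinearMap (Fin n) ℂ ℂ)

/-! Identify `Fin n` with `ZMod n`. Then `Q` is the diagonal matrix of the additive character
`ψ j = ω ^ j` and `P` is the permutation matrix of `j ↦ j + 1`, so the nonzero entries of
`X_{(r,s)}` are `ψ (r * j)` at the positions `(j, j + s)`. The characters `j ↦ ψ (r * j)` are
pairwise distinct, hence linearly independent, and therefore so are all `n²` matrices `X_u`.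
If `u ≠ (0, 0)`, then `X_u` is off-diagonal (`s ≠ 0`) or its trace is the character sum
`∑ j, ψ (r * j) = 0` (`s = 0`, `r ≠ 0`). Since `sl(n, ℂ)` has dimension `n² - 1`, these
`n² - 1` independent matrices form a basis. -/

section ShiftMatrix

variable {G : Type*} [AddGroup G] [DecidableEq G]

def shiftMatrix (R : Type*) [Zero R] [One R] (a : G) : Matrix G G R :=
  of fun j k => if k = j + a then 1 else 0

variable {R : Type*}

lemma shiftMatrix_zero [Zero R] [One R] : shiftMatrix R (0 : G) = 1 := by
  ext j k
  simp [shiftMatrix, one_apply, eq_comm]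

variable [Semiring R] [Fintype G]

lemma shiftMatrix_mul_shiftMatrix (a b : G) :
    shiftMatrix R a * shiftMatrix R b = shiftMatrix R (a + b) := by
  ext j k
  simp only [shiftMatrix, mul_apply, of_apply, ite_mul, one_mul, zero_mul]
  simp [Finset.sum_ite_eq', add_assoc]

lemma shiftMatrix_pow (a : G) (m : ℕ) : shiftMatrix R a ^ m = shiftMatrix R (m • a) := by
  induction m with
  | zero => simp [shiftMatrix_zero]
  | succ m ih => rw [pow_succ, ih, shiftMatrix_mul_shiftMatrix, succ_nsmul]

lemma diagonal_mul_shiftMatrix_apply (d : G → R) (a j k : G) :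
    (diagonal d * shiftMatrix R a) j k = if k = j + a then d j else 0 := by
  simp [shiftMatrix, diagonal_mul]

lemma trace_diagonal_mul_shiftMatrix (d : G → R) (a : G) :
    trace (diagonal d * shiftMatrix R a) = if a = 0 then ∑ j, d j else 0 := by
  split_ifs with ha <;> simp [trace, diagonal_mul_shiftMatrix_apply, -diagonal_mul, ha]

lemma linearIndependent_diagonal_mul_shiftMatrix {ι K : Type*} [Fintype ι] [Ring K]
    {ψ : ι → G → K} (hψ : LinearIndependent K ψ) :
    LinearIndependent K fun u : ι × G => diagonal (ψ u.1) * shiftMatrix K u.2 := by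
  rw [Fintype.linearIndependent_iff] at hψ ⊢
  rintro g hg ⟨r, s⟩
  refine hψ (fun r => g (r, s)) ?_ r
  ext j
  simpa [Matrix.sum_apply, diagonal_mul_shiftMatrix_apply, -diagonal_mul, Fintype.sum_prod_type,
    Finset.sum_apply] using congr_fun (congr_fun hg j) (j + s)

end ShiftMatrix

lemma trace_reindex {m l R : Type*} [Fintype m] [Fintype l] [AddCommMonoid R] (e : m ≃ l)
    (A : Matrix m m R) : trace (reindex e e A) = trace A :=
  e.symm.sum_comp A.diag

lemma finrank_ker_traceLinearMap (ι K : Type*) [Fintype ι] [DecidableEq ι] [Nonempty ι]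
    [Field K] :
    Module.finrank K (LinearMap.ker (traceLinearMap ι K K)) =
      Fintype.card ι * Fintype.card ι - 1 := by
  have hsurj : Function.Surjective (traceLinearMap ι K K) := fun c =>
    ⟨single (Classical.arbitrary ι) (Classical.arbitrary ι) c, trace_single_eq_same _ _⟩
  have := (traceLinearMap ι K K).finrank_range_add_finrank_ker
  rw [LinearMap.range_eq_top.mpr hsurj, finrank_top, Module.finrank_self,
    Module.finrank_matrix, Module.finrank_self, mul_one] at this
  omega

section Pauli

variable {n : ℕ} [NeZero n]

def zmodEquivFin (n : ℕ) [NeZero n] : ZMod n ≃ Fin n where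
  toFun z := ⟨z.val, z.val_lt⟩
  invFun j := (j : ℕ)
  left_inv := ZMod.natCast_zmod_val
  right_inv j := Fin.ext (ZMod.val_cast_of_lt j.isLt)

lemma isPrimitiveRoot_om : IsPrimitiveRoot (om n) n :=
  Complex.isPrimitiveRoot_exp n (NeZero.ne n)

noncomputable def omChar (n : ℕ) [NeZero n] : AddChar (ZMod n) ℂ :=
  AddChar.zmodChar n isPrimitiveRoot_om.pow_eq_one

lemma Qm_eq_reindex : Qm n = reindex (zmodEquivFin n) (zmodEquivFin n) (diagonal (omChar n)) := by
  rw [reindex_apply, submatrix_diagonal_equiv, Qm]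
  congr with j
  exact (AddChar.zmodChar_apply' _ _).symm

lemma Pm_eq_reindex : Pm n = reindex (zmodEquivFin n) (zmodEquivFin n) (shiftMatrix ℂ 1) :=
  rfl

lemma Xm_eq_reindex (u : ZMod n × ZMod n) :
    Xm n u = reindex (zmodEquivFin n) (zmodEquivFin n)
      (diagonal ((omChar n).mulShift u.1) * shiftMatrix ℂ u.2) := by
  have hclock : (⇑(omChar n)) ^ u.1.val = (omChar n).mulShift u.1 := by
    ext j
    rw [Pi.pow_apply, ← AddChar.map_nsmul_eq_pow, AddChar.mulShift_apply, nsmul_eq_mul,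
      ZMod.natCast_zmod_val]
  have hshift : u.2.val • (1 : ZMod n) = u.2 := by
    rw [nsmul_one, ZMod.natCast_zmod_val]
  rw [Xm, Qm_eq_reindex, Pm_eq_reindex, ← coe_reindexAlgEquiv ℂ ℂ, ← map_pow, ← map_pow,
    ← map_mul, diagonal_pow, shiftMatrix_pow, hclock, hshift]

lemma isPrimitive_omChar : (omChar n).IsPrimitive :=
  AddChar.zmodChar_primitive_of_primitive_root n isPrimitiveRoot_om

lemma linearIndependent_Xm : LinearIndependent ℂ (Xm n) := by
  have hchars : LinearIndependent ℂ fun r : ZMod n => ⇑((omChar n).mulShift r) :=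
    (AddChar.linearIndependent (ZMod n) ℂ).comp _
      (AddChar.to_mulShift_inj_of_isPrimitive isPrimitive_omChar)
  rw [show Xm n = _ from funext Xm_eq_reindex]
  exact (linearIndependent_diagonal_mul_shiftMatrix hchars).map'
    (reindexLinearEquiv ℂ ℂ (zmodEquivFin n) (zmodEquivFin n)).toLinearMap (LinearEquiv.ker _)

lemma trace_Xm {u : ZMod n × ZMod n} (hu : u ≠ (0, 0)) : trace (Xm n u) = 0 := by
  rw [Xm_eq_reindex, trace_reindex, trace_diagonal_mul_shiftMatrix]
  split_ifs with hs
  · have hr : u.1 ≠ 0 := fun hr => hu (Prod.ext hr hs)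
    simpa [AddChar.mulShift_apply, mul_comm, hr] using AddChar.sum_mulShift u.1 isPrimitive_omChar
  · rfl

end Pauli

/-- The family (X_{(r,s)})_{(r,s) ≠ (0,0)} is a basis of sl(n,ℂ). -/
theorem stmt5 (n : ℕ) (hn : 1 ≤ n) :
    ∃ b : Module.Basis {u : ZMod n × ZMod n // u ≠ (0, 0)} ℂ (slC n),
      ∀ u, (b u : Matrix (Fin n) (Fin n) ℂ) = Xm n u.val := by
  have : NeZero n := ⟨by omega⟩
  let v : {u : ZMod n × ZMod n // u ≠ (0, 0)} → slC n := fun u => ⟨Xm n u, trace_Xm u.2⟩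
  have hli : LinearIndependent ℂ v :=
    .of_comp (slC n).subtype (linearIndependent_Xm.comp _ Subtype.val_injective)
  have hcard :
      Fintype.card {u : ZMod n × ZMod n // u ≠ (0, 0)} = Module.finrank ℂ (slC n) := by
    rw [slC, finrank_ker_traceLinearMap, Fintype.card_subtype_compl, Fintype.card_subtype_eq,
      Fintype.card_prod, ZMod.card, Fintype.card_fin]
  exact ⟨basisOfLinearIndependentOfCardEqFinrank' v hli hcard, fun u => by
    rw [coe_basisOfLinearIndependentOfCardEqFinrank']⟩
end

section
/- Let n ≥ 1 and let A be an invertible n×n complex matrix. The ℂ-linear endomorphism Ad_A : X ↦ A⁻¹ X A of the space of n×n complex matrices admits a basis of eigenvectors (i.e., there is a basis (b_i) of M_n(ℂ) and scalars μ_i ∈ ℂ with A⁻¹ b_i A = μ_i · b_i for all i) if and only if A is diagonalizable (i.e., there exist an invertible matrix S and a diagonal matrix D with A = S D S⁻¹). -/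
/-!
If `A = S D S⁻¹`, conjugating the matrix units by `S` gives an eigenbasis of `X ↦ A⁻¹ X A`.
Conversely, let `A v = c v` with `v ≠ 0`. If `A⁻¹ X A = μ X` then `X A = μ A X`, so `X v` is an
eigenvector of `A` with eigenvalue `c / μ` (or zero). As `X` runs through an eigenbasis of
`X ↦ A⁻¹ X A`, the vectors `X v` span the whole space, because `X ↦ X v` is onto; hence the
eigenspaces of `A` span, and a basis of eigenvectors diagonalizes `A`.
-/

open Matrix Module

namespace Matrix

variable {l m K : Type*} [Fintype m] [DecidableEq m] [Field K]

theorem ne_zero_of_isUnit_mul_diagonal_mul {S T : Matrix m m K} {d : m → K}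
    (h : IsUnit (S * diagonal d * T)) (i : m) : d i ≠ 0 := by
  have hdet := ((isUnit_iff_isUnit_det _).mp h).ne_zero
  rw [det_mul, det_mul, det_diagonal] at hdet
  exact Finset.prod_ne_zero_iff.mp (right_ne_zero_of_mul (left_ne_zero_of_mul hdet)) i
    (Finset.mem_univ i)

theorem inv_diagonal_mul_single_mul_diagonal {d : m → K} (hd : ∀ i, d i ≠ 0) (i j : m) :
    (diagonal d)⁻¹ * single i j 1 * diagonal d = ((d i)⁻¹ * d j) • single i j 1 := by
  rw [inv_eq_left_inv (B := diagonal d⁻¹) (by simp [diagonal_mul_diagonal, hd])]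
  ext a b
  rw [mul_diagonal, diagonal_mul]
  by_cases h : i = a ∧ j = b
  · obtain ⟨rfl, rfl⟩ := h
    simp [mul_comm]
  · simp [single, h]

theorem exists_basis_inv_mul_mul_eq_smul_of_eq_mul_diagonal_mul_inv {A S : Matrix m m K}
    {d : m → K} (hS : IsUnit S) (hd : ∀ i, d i ≠ 0) (hA : A = S * diagonal d * S⁻¹) :
    ∃ (b : Basis (m × m) K (Matrix m m K)) (μ : m × m → K), ∀ p, A⁻¹ * b p * A = μ p • b p := by
  subst hA
  have := hS.invertible
  -- the basis `S * single i j 1 * S⁻¹`, the image of the matrix units under conjugation by `S`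
  refine ⟨(stdBasis K m m).map
      (MulSemiringAction.toAlgEquiv K (Matrix m m K) (ConjAct.toConjAct hS.unit)).toLinearEquiv,
    fun p => (d p.1)⁻¹ * d p.2, fun ⟨i, j⟩ => ?_⟩
  rw [Basis.map_apply, stdBasis_eq_single]
  simp only [AlgEquiv.toLinearEquiv_apply, MulSemiringAction.toAlgEquiv_apply,
    ConjAct.units_smul_def, ConjAct.ofConjAct_toConjAct, IsUnit.unit_spec, coe_units_inv,
    mul_inv_rev, inv_inv_of_invertible, Matrix.mul_assoc, inv_mul_cancel_left_of_invertible]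
  rw [← Matrix.mul_smul, ← Matrix.smul_mul, ← inv_diagonal_mul_single_mul_diagonal hd]
  simp only [Matrix.mul_assoc]

theorem exists_mulVec_eq {v : m → K} (hv : v ≠ 0) (w : l → K) :
    ∃ X : Matrix l m K, X *ᵥ v = w := by
  obtain ⟨i, hi⟩ := Function.ne_iff.mp hv
  refine ⟨vecMulVec w (Pi.single i (v i)⁻¹), ?_⟩
  rw [vecMulVec_mulVec, single_dotProduct, inv_mul_cancel₀ hi]
  simp

theorem mulVec_mem_eigenspace_of_inv_mul_mul_eq_smul {A X : Matrix m m K} (hA : IsUnit A)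
    {μ c : K} (hX : A⁻¹ * X * A = μ • X) {v : m → K} (hv : A *ᵥ v = c • v) :
    X *ᵥ v ∈ End.eigenspace A.mulVecLin (c / μ) := by
  have hdet := (isUnit_iff_isUnit_det A).mp hA
  have hXA : X * A = μ • (A * X) := by
    rw [← Matrix.mul_smul, ← hX, Matrix.mul_assoc, mul_nonsing_inv_cancel_left _ _ hdet]
  rcases eq_or_ne μ 0 with rfl | hμ
  -- here `c / μ = 0`, but `X = 0`
  · have hX0 : X = 0 := by
      rw [zero_smul] at hXA
      rw [← mul_nonsing_inv_cancel_right A X hdet, hXA, Matrix.zero_mul]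
    simp [hX0, zero_mem]
  · rw [End.mem_eigenspace_iff, mulVecLin_apply, mulVec_mulVec,
      eq_inv_smul_iff₀ hμ |>.mpr hXA.symm, smul_mulVec, ← mulVec_mulVec, hv, mulVec_smul,
      smul_smul, div_eq_inv_mul]

theorem iSup_eigenspace_mulVecLin_eq_top [IsAlgClosed K] {A : Matrix m m K} (hA : IsUnit A)
    {ι : Type*} (b : Basis ι K (Matrix m m K)) (μ : ι → K)
    (hb : ∀ i, A⁻¹ * b i * A = μ i • b i) :
    ⨆ c, End.eigenspace A.mulVecLin c = ⊤ := by
  rcases subsingleton_or_nontrivial (m → K) with _ | _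
  · exact Subsingleton.elim _ _
  obtain ⟨c, hc⟩ := End.exists_eigenvalue A.mulVecLin
  obtain ⟨v, hv⟩ := hc.exists_hasEigenvector
  refine eq_top_iff.mpr fun w _ => ?_
  obtain ⟨X, rfl⟩ := exists_mulVec_eq hv.2 w
  suffices X ∈ (⨆ c, End.eigenspace A.mulVecLin c).comap ((mulVecBilin K K).flip v) from this
  refine Submodule.span_le.mpr ?_ (b.mem_span X)
  rintro _ ⟨i, rfl⟩
  exact Submodule.mem_iSup_of_mem _
    (mulVec_mem_eigenspace_of_inv_mul_mul_eq_smul hA (hb i) hv.apply_eq_smul)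

theorem exists_eq_mul_diagonal_mul_inv_of_mulVec_basis {A : Matrix m m K} {ι : Type*}
    (b : Basis ι K (m → K)) (μ : ι → K) (hb : ∀ i, A *ᵥ b i = μ i • b i) :
    ∃ (S : Matrix m m K) (D : m → K), IsUnit S ∧ A = S * diagonal D * S⁻¹ := by
  let e := b.indexEquiv (Pi.basisFun K m)
  let S := (Pi.basisFun K m).toMatrix (b.reindex e)
  have : Invertible S := (Pi.basisFun K m).invertibleToMatrix _
  have hAS : A * S = S * diagonal (μ ∘ e.symm) := by
    ext i j
    have := congrFun (hb (e.symm j)) i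
    simp only [mulVec, dotProduct, Pi.smul_apply, smul_eq_mul] at this
    rw [mul_diagonal, mul_apply]
    simp [S, Basis.toMatrix_apply, this, mul_comm]
  refine ⟨S, μ ∘ e.symm, isUnit_of_invertible S, ?_⟩
  rw [← hAS, mul_inv_cancel_right_of_invertible]

theorem exists_eq_mul_diagonal_mul_inv_of_iSup_eigenspace_eq_top {A : Matrix m m K}
    (h : ⨆ c, End.eigenspace A.mulVecLin c = ⊤) :
    ∃ (S : Matrix m m K) (D : m → K), IsUnit S ∧ A = S * diagonal D * S⁻¹ := by
  classical
  have hint := DirectSum.isInternal_submodule_of_iSupIndep_of_iSup_eq_top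
    (End.eigenspaces_iSupIndep A.mulVecLin) h
  let v c := Basis.ofVectorSpace K (End.eigenspace A.mulVecLin c)
  exact exists_eq_mul_diagonal_mul_inv_of_mulVec_basis (hint.collectedBasis v) Sigma.fst
    fun i => End.mem_eigenspace_iff.mp (hint.collectedBasis_mem v i)

end Matrix

theorem stmt7_general (n : ℕ) (A : Matrix (Fin n) (Fin n) ℂ) (hA : IsUnit A) :
    (∃ (ι : Type) (b : Module.Basis ι ℂ (Matrix (Fin n) (Fin n) ℂ)) (μ : ι → ℂ),
        ∀ i, A⁻¹ * b i * A = μ i • b i) ↔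
      ∃ (S : Matrix (Fin n) (Fin n) ℂ) (D : Fin n → ℂ),
        IsUnit S ∧ A = S * Matrix.diagonal D * S⁻¹ := by
  constructor
  · rintro ⟨ι, b, μ, hb⟩
    exact exists_eq_mul_diagonal_mul_inv_of_iSup_eigenspace_eq_top
      (iSup_eigenspace_mulVecLin_eq_top hA b μ hb)
  · rintro ⟨S, D, hS, hAS⟩
    obtain ⟨b, μ, hb⟩ := exists_basis_inv_mul_mul_eq_smul_of_eq_mul_diagonal_mul_inv hS
      (ne_zero_of_isUnit_mul_diagonal_mul (hAS ▸ hA)) hAS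
    exact ⟨_, b, μ, hb⟩

/-- For an invertible n×n complex matrix A, the inner automorphism
    Ad_A : X ↦ A⁻¹ X A of M_n(ℂ) admits a basis of eigenvectors if and only if
    A is diagonalizable. -/
theorem stmt7 (n : ℕ) (hn : 1 ≤ n) (A : Matrix (Fin n) (Fin n) ℂ) (hA : IsUnit A) :
    (∃ (ι : Type) (b : Module.Basis ι ℂ (Matrix (Fin n) (Fin n) ℂ)) (μ : ι → ℂ),
        ∀ i, A⁻¹ * b i * A = μ i • b i) ↔
      ∃ (S : Matrix (Fin n) (Fin n) ℂ) (D : Fin n → ℂ),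
        IsUnit S ∧ A = S * Matrix.diagonal D * S⁻¹ :=
  stmt7_general n A hA
end

section
/- Let n ≥ 1 and let A, B be invertible n×n complex matrices. The inner automorphisms Ad_A and Ad_B commute, i.e. B⁻¹(A⁻¹ X A)B = A⁻¹(B⁻¹ X B)A for every n×n complex matrix X, if and only if there exists q ∈ ℂ with A·B = q·(B·A) and qⁿ = 1. -/
/-!
`Ad_B ∘ Ad_A = Ad_{AB}` and `Ad_A ∘ Ad_B = Ad_{BA}`, and `Ad_M = Ad_N` exactly when `M N⁻¹`
commutes with every matrix, i.e. is a scalar matrix. So the automorphisms commute iff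
`AB = q • BA` for some `q`; taking determinants then forces `qⁿ = 1`.
-/

open Matrix

namespace Matrix

variable {m R : Type*} [Fintype m] [DecidableEq m] [CommRing R]

theorem inv_mul_mul_eq_inv_mul_mul_iff {M N : Matrix m m R} (hM : IsUnit M.det)
    (hN : IsUnit N.det) (X : Matrix m m R) :
    M⁻¹ * X * M = N⁻¹ * X * N ↔ X * (M * N⁻¹) = M * N⁻¹ * X := by
  have := M.invertibleOfIsUnitDet hM
  have := N.invertibleOfIsUnitDet hN
  rw [mul_assoc, inv_mul_eq_iff_eq_mul_of_invertible M (X * M),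
    ← mul_assoc X, mul_inv_eq_iff_eq_mul_of_invertible N]
  simp only [mul_assoc]

theorem scalar_eq_mul_inv_iff {M N : Matrix m m R} (hN : IsUnit N.det) (q : R) :
    scalar m q = M * N⁻¹ ↔ M = q • N := by
  have := N.invertibleOfIsUnitDet hN
  rw [eq_comm, mul_inv_eq_iff_eq_mul_of_invertible, scalar_apply, smul_eq_diagonal_mul]

theorem pow_card_eq_one_of_mul_eq_smul_mul {A B : Matrix m m R} (hA : IsUnit A.det)
    (hB : IsUnit B.det) {q : R} (h : A * B = q • (B * A)) : q ^ Fintype.card m = 1 := by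
  have hdet := congrArg det h
  rw [det_smul, det_mul, det_mul, mul_comm B.det] at hdet
  exact ((hA.mul hB).mul_left_injective (by simpa using hdet)).symm

theorem conj_comm_iff_exists_mul_eq_smul_mul {A B : Matrix m m R} (hA : IsUnit A.det)
    (hB : IsUnit B.det) :
    (∀ X : Matrix m m R, B⁻¹ * (A⁻¹ * X * A) * B = A⁻¹ * (B⁻¹ * X * B) * A) ↔
      ∃ q : R, A * B = q • (B * A) := by
  have hAB : IsUnit (A * B).det := by rw [det_mul]; exact hA.mul hB
  have hBA : IsUnit (B * A).det := by rw [det_mul]; exact hB.mul hA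
  calc (∀ X : Matrix m m R, B⁻¹ * (A⁻¹ * X * A) * B = A⁻¹ * (B⁻¹ * X * B) * A)
      ↔ ∀ X, (A * B)⁻¹ * X * (A * B) = (B * A)⁻¹ * X * (B * A) := by
        simp only [mul_inv_rev, mul_assoc]
    _ ↔ ∀ X, X * (A * B * (B * A)⁻¹) = A * B * (B * A)⁻¹ * X :=
        forall_congr' (inv_mul_mul_eq_inv_mul_mul_iff hAB hBA)
    _ ↔ A * B * (B * A)⁻¹ ∈ Set.center (Matrix m m R) := Semigroup.mem_center_iff.symm
    _ ↔ ∃ q : R, scalar m q = A * B * (B * A)⁻¹ := by rw [center_eq_range]; rfl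
    _ ↔ ∃ q : R, A * B = q • (B * A) := exists_congr (scalar_eq_mul_inv_iff hBA)

end Matrix

theorem stmt8_general (n : ℕ) (A B : Matrix (Fin n) (Fin n) ℂ)
    (hA : IsUnit A) (hB : IsUnit B) :
    (∀ X : Matrix (Fin n) (Fin n) ℂ,
        B⁻¹ * (A⁻¹ * X * A) * B = A⁻¹ * (B⁻¹ * X * B) * A) ↔
      ∃ q : ℂ, A * B = q • (B * A) ∧ q ^ n = 1 := by
  have hdA := (isUnit_iff_isUnit_det A).mp hA
  have hdB := (isUnit_iff_isUnit_det B).mp hB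
  rw [conj_comm_iff_exists_mul_eq_smul_mul hdA hdB]
  refine ⟨fun ⟨q, hq⟩ => ⟨q, hq, ?_⟩, fun ⟨q, hq, _⟩ => ⟨q, hq⟩⟩
  simpa using pow_card_eq_one_of_mul_eq_smul_mul hdA hdB hq

/-- For invertible n×n complex matrices A and B, the inner automorphisms
    Ad_A : X ↦ A⁻¹ X A and Ad_B : X ↦ B⁻¹ X B commute if and only if
    there exists q ∈ ℂ with A·B = q·(B·A) and qⁿ = 1. -/
theorem stmt8 (n : ℕ) (hn : 1 ≤ n) (A B : Matrix (Fin n) (Fin n) ℂ)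
    (hA : IsUnit A) (hB : IsUnit B) :
    (∀ X : Matrix (Fin n) (Fin n) ℂ,
        B⁻¹ * (A⁻¹ * X * A) * B = A⁻¹ * (B⁻¹ * X * B) * A) ↔
      ∃ q : ℂ, A * B = q • (B * A) ∧ q ^ n = 1 :=
  stmt8_general n A B hA hB
end

section
/- Let n ≥ 1 and let C be an invertible n×n complex matrix. The ℂ-linear endomorphism Out_C : X ↦ −(C⁻¹ X C)ᵀ of the space of n×n complex matrices admits a basis of eigenvectors (i.e., there is a basis (b_i) of M_n(ℂ) and scalars μ_i ∈ ℂ with Out_C(b_i) = μ_i · b_i for all i) if and only if the matrix C·(Cᵀ)⁻¹ is diagonalizable (i.e., there exist an invertible matrix S and a diagonal matrix D with C(Cᵀ)⁻¹ = S D S⁻¹). -/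
/-!
With `A = C (Cᵀ)⁻¹`, the square of `Out_C` is the conjugation `X ↦ A⁻¹ X A`. Diagonalizability
(eigenspaces spanning the whole space) passes between an injective endomorphism `f` and `f ^ 2`
over an algebraically closed field of characteristic `≠ 2`, because an eigenvector of `f ^ 2` for `s ^ 2 ≠ 0` is a sum of eigenvectors of `f` for `s`
and `-s`. The conjugation by `A` is diagonalizable iff `A` is: if `A = S D S⁻¹`, the matrices
`S Eⱼₖ S⁻¹` are eigenvectors spanning `M_n(ℂ)`; conversely, evaluating eigenvectors of the
conjugation at one eigenvector of `A` gives eigenvectors of `A` spanning `ℂⁿ`.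
-/

open Matrix

universe u

namespace Module.End

section CommRing

variable {R : Type*} {V : Type u} [CommRing R] [AddCommGroup V] [Module R V] (f : End R V)

theorem iSup_eigenspace_eq_top_of_span_eq_top {ι : Type*} {v : ι → V} {μ : ι → R}
    (hv : ∀ i, f (v i) = μ i • v i) (hspan : Submodule.span R (Set.range v) = ⊤) :
    ⨆ a, f.eigenspace a = ⊤ := by
  refine eq_top_iff.mpr (hspan ▸ Submodule.span_le.mpr ?_)
  rintro _ ⟨i, rfl⟩
  exact Submodule.mem_iSup_of_mem (μ i) (mem_eigenspace_iff.mpr (hv i))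

theorem eigenspace_le_eigenspace_sq (a : R) : f.eigenspace a ≤ (f ^ 2).eigenspace (a ^ 2) := by
  intro v hv
  rw [mem_eigenspace_iff] at hv ⊢
  rw [sq, mul_apply, hv, map_smul, hv, smul_smul, sq]

end CommRing

variable {K : Type*} {V : Type u} [Field K] [AddCommGroup V] [Module K V] (f : End K V)

theorem exists_eigenbasis_iff :
    (∃ (ι : Type u) (b : Basis ι K V) (μ : ι → K), ∀ i, f (b i) = μ i • b i) ↔
      ⨆ a, f.eigenspace a = ⊤ := by
  refine ⟨fun ⟨ι, b, μ, hb⟩ ↦ f.iSup_eigenspace_eq_top_of_span_eq_top hb b.span_eq, fun h ↦ ?_⟩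
  obtain ⟨s, hs, hspan, hli⟩ := exists_linearIndependent K (⋃ a, (f.eigenspace a : Set V))
  have heigen : ∀ x : s, ∃ a, f x = a • (x : V) := fun x ↦ by
    simpa [mem_eigenspace_iff] using hs x.2
  choose μ hμ using heigen
  have htop : ⊤ ≤ Submodule.span K (Set.range ((↑) : s → V)) := by
    rw [Subtype.range_coe, hspan, ← Submodule.iSup_eq_span, h]
  exact ⟨s, Basis.mk hli htop, μ, fun x ↦ by simpa using hμ x⟩

/-- An eigenvector of `f ^ 2` for `s ^ 2` splits as `(f v + s v) / 2s + (s v - f v) / 2s`. -/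
theorem eigenspace_sq_le_sup [NeZero (2 : K)] {s : K} (hs : s ≠ 0) :
    (f ^ 2).eigenspace (s ^ 2) ≤ f.eigenspace s ⊔ f.eigenspace (-s) := by
  intro v hv
  rw [mem_eigenspace_iff, sq, mul_apply] at hv
  have h2s : (2 * s)⁻¹ * (2 * s) = 1 := inv_mul_cancel₀ (mul_ne_zero two_ne_zero hs)
  refine Submodule.mem_sup.mpr ⟨(2 * s)⁻¹ • (f v + s • v), ?_, (2 * s)⁻¹ • (s • v - f v), ?_, ?_⟩
  · rw [mem_eigenspace_iff, map_smul, map_add, map_smul, hv, smul_comm]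
    module
  · rw [mem_eigenspace_iff, map_smul, map_sub, map_smul, hv, smul_comm]
    module
  · rw [← smul_add, show f v + s • v + (s • v - f v) = (2 * s) • v by module, smul_smul, h2s,
      one_smul]

theorem iSup_eigenspace_sq_eq_top_iff [IsAlgClosed K] [NeZero (2 : K)]
    (hf : Function.Injective f) :
    ⨆ a, (f ^ 2).eigenspace a = ⊤ ↔ ⨆ a, f.eigenspace a = ⊤ := by
  refine ⟨fun h ↦ eq_top_iff.mpr (h ▸ iSup_le fun a ↦ ?_), fun h ↦ eq_top_iff.mpr (h ▸ iSup_le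
    fun a ↦ (f.eigenspace_le_eigenspace_sq a).trans (le_iSup _ (a ^ 2)))⟩
  obtain ⟨s, rfl⟩ := IsAlgClosed.exists_pow_nat_eq a two_pos
  rcases eq_or_ne s 0 with rfl | hs
  · intro v hv
    rw [mem_eigenspace_iff, sq, mul_apply, zero_pow two_ne_zero, zero_smul] at hv
    obtain rfl : v = 0 := hf (hf (by rw [hv, map_zero, map_zero]))
    exact zero_mem _
  · exact (f.eigenspace_sq_le_sup hs).trans (sup_le (le_iSup _ s) (le_iSup _ (-s)))

end Module.End

namespace Matrix

section Semiring

variable {m α : Type*} [Fintype m] [DecidableEq m] [Semiring α]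

theorem diagonal_mul_single (D : m → α) (j k : m) :
    diagonal D * single j k 1 = D j • single j k 1 := by
  ext a b
  rw [diagonal_mul, smul_apply, single_apply]
  split_ifs with h
  · simp [h.1]
  · simp

theorem single_mul_diagonal (D : m → α) (j k : m) :
    single j k 1 * diagonal D = D k • single j k 1 := by
  ext a b
  rw [mul_diagonal, smul_apply, single_apply]
  split_ifs with h
  · simp [h.2]
  · simp

end Semiring

section Field

variable {m K : Type*} [Fintype m] [DecidableEq m] [Field K]

theorem iSup_eigenspace_toLin'_eq_top_iff (A : Matrix m m K) :
    ⨆ a, Module.End.eigenspace (toLin' A) a = ⊤ ↔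
      ∃ (S : Matrix m m K) (D : m → K), IsUnit S ∧ A = S * diagonal D * S⁻¹ := by
  constructor
  · intro h
    obtain ⟨ι, b, μ, hb⟩ := (Module.End.exists_eigenbasis_iff (toLin' A)).mpr h
    set e := b.indexEquiv (Pi.basisFun K m)
    set S := (Pi.basisFun K m).toMatrix (b.reindex e)
    have : Invertible S := (Pi.basisFun K m).invertibleToMatrix _
    have hS : IsUnit S := isUnit_of_invertible S
    have hAS : A * S = S * diagonal (μ ∘ e.symm) := by
      ext i j
      rw [mul_diagonal, mul_apply]
      simpa [S, Module.Basis.toMatrix_apply, mul_comm, mulVec, dotProduct] using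
        congrFun (hb (e.symm j)) i
    refine ⟨S, μ ∘ e.symm, hS, ?_⟩
    rw [← hAS, mul_nonsing_inv_cancel_right _ _ ((isUnit_iff_isUnit_det S).mp hS)]
  · rintro ⟨S, D, hS, rfl⟩
    have : Invertible S := hS.invertible
    set b := (Pi.basisFun K m).map (toLinearEquiv' S this)
    refine Module.End.iSup_eigenspace_eq_top_of_span_eq_top _ (v := b) (μ := D) (fun j ↦ ?_)
      b.span_eq
    have hcol : S * diagonal D * S⁻¹ * S = S * diagonal D := inv_mul_cancel_right_of_invertible _ _
    have hbj : b j = S *ᵥ Pi.single j 1 := by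
      rw [Module.Basis.map_apply, Pi.basisFun_apply]; rfl
    rw [hbj, toLin'_apply, mulVec_mulVec, hcol, ← mulVec_mulVec, diagonal_mulVec_single, mul_one,
      ← mulVec_smul, ← Pi.single_smul, smul_eq_mul, mul_one]

theorem inv_mul_mul_eq_div_smul {P Y : Matrix m m K} (hP : IsUnit P) {a b : K}
    (ha : P * Y = a • Y) (hb : Y * P = b • Y) : P⁻¹ * Y * P = (b / a) • Y := by
  have hY : Y = a • (P⁻¹ * Y) := by
    rw [← mul_smul_comm, ← ha, nonsing_inv_mul_cancel_left _ _ ((isUnit_iff_isUnit_det P).mp hP)]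
  rw [mul_assoc, hb, mul_smul_comm]
  rcases eq_or_ne a 0 with rfl | ha0
  · rw [hY, zero_smul, smul_zero, mul_zero, smul_zero]
  · nth_rw 2 [hY]
    rw [smul_smul, div_mul_cancel₀ _ ha0]

theorem mulVec_surjective_of_ne_zero {v : m → K} (hv : v ≠ 0) :
    Function.Surjective fun X : Matrix m m K ↦ X *ᵥ v := by
  obtain ⟨j, hj⟩ := Function.ne_iff.mp hv
  intro u
  refine ⟨vecMulVec u (Pi.single j (v j)⁻¹), ?_⟩
  change vecMulVec u _ *ᵥ v = u
  rw [vecMulVec_mulVec, single_dotProduct, inv_mul_cancel₀ hj]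
  simp

-- For `c = 0` the conclusion says `X v = 0`, with the junk value `a / 0 = 0`.
theorem mulVec_mem_eigenspace_of_inv_mul_mul_eq_smul_s9 {P X : Matrix m m K} (hP : IsUnit P)
    {v : m → K} {a c : K} (ha : a ≠ 0) (hPv : P *ᵥ v = a • v) (hX : P⁻¹ * X * P = c • X) :
    X *ᵥ v ∈ Module.End.eigenspace (toLin' P) (a / c) := by
  have hXP : X * P = c • (P * X) := by
    rw [← mul_smul_comm, ← hX, ← mul_assoc, ← mul_assoc,
      mul_nonsing_inv _ ((isUnit_iff_isUnit_det P).mp hP), one_mul]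
  have hXv : a • (X *ᵥ v) = c • (P *ᵥ (X *ᵥ v)) := by
    rw [← mulVec_smul, ← hPv, mulVec_mulVec, hXP, smul_mulVec, mulVec_mulVec]
  rw [Module.End.mem_eigenspace_iff, toLin'_apply]
  rcases eq_or_ne c 0 with rfl | hc
  · rw [zero_smul, smul_eq_zero_iff_right ha] at hXv
    rw [hXv, mulVec_zero, smul_zero]
  · rw [div_eq_inv_mul, mul_smul, hXv, smul_smul, inv_mul_cancel₀ hc, one_smul]

theorem iSup_eigenspace_toLin'_eq_top_of_mulLeftRight [IsAlgClosed K] {P : Matrix m m K}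
    (hP : IsUnit P) (h : ⨆ c, Module.End.eigenspace (LinearMap.mulLeftRight K (P⁻¹, P)) c = ⊤) :
    ⨆ a, Module.End.eigenspace (toLin' P) a = ⊤ := by
  cases isEmpty_or_nonempty m
  · exact Subsingleton.elim _ _
  obtain ⟨a, ha⟩ := Module.End.exists_eigenvalue (toLin' P)
  obtain ⟨v, hv⟩ := ha.exists_hasEigenvector
  have hPv : P *ᵥ v = a • v := hv.apply_eq_smul
  have ha0 : a ≠ 0 := by
    rintro rfl
    apply hv.2
    rw [← one_mulVec v, ← nonsing_inv_mul P ((isUnit_iff_isUnit_det P).mp hP), ← mulVec_mulVec,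
      hPv, zero_smul, mulVec_zero]
  let ev : Matrix m m K →ₗ[K] m → K := LinearMap.applyₗ v ∘ₗ (toLin' : _ ≃ₗ[K] _).toLinearMap
  have hev : LinearMap.range ev = ⊤ :=
    LinearMap.range_eq_top.mpr (mulVec_surjective_of_ne_zero hv.2)
  rw [eq_top_iff, ← hev, LinearMap.range_eq_map, ← h, Submodule.map_iSup]
  refine iSup_le fun c ↦ le_iSup_of_le (a / c) ?_
  rintro _ ⟨X, hX, rfl⟩
  rw [SetLike.mem_coe, Module.End.mem_eigenspace_iff, LinearMap.mulLeftRight_apply] at hX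
  exact mulVec_mem_eigenspace_of_inv_mul_mul_eq_smul_s9 hP ha0 hPv hX

theorem inv_mul_mul_conj_single_eq_div_smul {S : Matrix m m K} [Invertible S] {D : m → K}
    (hP : IsUnit (S * diagonal D * S⁻¹)) (j k : m) :
    (S * diagonal D * S⁻¹)⁻¹ * (S * single j k 1 * S⁻¹) * (S * diagonal D * S⁻¹) =
      (D k / D j) • (S * single j k 1 * S⁻¹) := by
  apply inv_mul_mul_eq_div_smul hP
  · rw [show S * diagonal D * S⁻¹ * (S * single j k 1 * S⁻¹) =
        S * (diagonal D * single j k 1) * S⁻¹ by simp [mul_assoc],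
      diagonal_mul_single, mul_smul_comm, smul_mul_assoc]
  · rw [show S * single j k 1 * S⁻¹ * (S * diagonal D * S⁻¹) =
        S * (single j k 1 * diagonal D) * S⁻¹ by simp [mul_assoc],
      single_mul_diagonal, mul_smul_comm, smul_mul_assoc]

theorem iSup_eigenspace_mulLeftRight_eq_top_of_toLin' {P : Matrix m m K} (hP : IsUnit P)
    (h : ⨆ a, Module.End.eigenspace (toLin' P) a = ⊤) :
    ⨆ c, Module.End.eigenspace (LinearMap.mulLeftRight K (P⁻¹, P)) c = ⊤ := by
  obtain ⟨S, D, hS, rfl⟩ := (iSup_eigenspace_toLin'_eq_top_iff P).mp h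
  have : Invertible S := hS.invertible
  let conjS : Module.End K (Matrix m m K) := LinearMap.mulLeftRight K (S, S⁻¹)
  have hconjS : Function.Surjective conjS := fun X ↦ ⟨S⁻¹ * X * S, by simp [conjS, mul_assoc]⟩
  refine Module.End.iSup_eigenspace_eq_top_of_span_eq_top _ (v := conjS ∘ stdBasis K m m)
    (μ := fun p ↦ D p.2 / D p.1) (fun ⟨j, k⟩ ↦ ?_) ?_
  · simpa only [Function.comp_apply, conjS, LinearMap.mulLeftRight_apply, stdBasis_eq_single]
      using inv_mul_mul_conj_single_eq_div_smul hP j k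
  · rw [Set.range_comp, Submodule.span_image, (stdBasis K m m).span_eq, Submodule.map_top,
      LinearMap.range_eq_top.mpr hconjS]

theorem iSup_eigenspace_mulLeftRight_eq_top_iff [IsAlgClosed K] {P : Matrix m m K}
    (hP : IsUnit P) :
    ⨆ c, Module.End.eigenspace (LinearMap.mulLeftRight K (P⁻¹, P)) c = ⊤ ↔
      ⨆ a, Module.End.eigenspace (toLin' P) a = ⊤ :=
  ⟨iSup_eigenspace_toLin'_eq_top_of_mulLeftRight hP,
    iSup_eigenspace_mulLeftRight_eq_top_of_toLin' hP⟩

end Field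

section CommRing

variable {m R : Type*} [Fintype m] [DecidableEq m] [CommRing R]

noncomputable def outerAut (C : Matrix m m R) : Module.End R (Matrix m m R) where
  toFun X := -(C⁻¹ * X * C)ᵀ
  map_add' X Y := by rw [mul_add, add_mul, transpose_add, neg_add]
  map_smul' c X := by simp

theorem outerAut_apply (C X : Matrix m m R) : outerAut C X = -(C⁻¹ * X * C)ᵀ := rfl

theorem outerAut_injective {C : Matrix m m R} (hC : IsUnit C) :
    Function.Injective (outerAut C) := by
  have : Invertible C := hC.invertible
  intro X Y h
  rw [outerAut_apply, outerAut_apply, neg_inj, (transpose_injective).eq_iff] at h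
  simpa [mul_assoc] using congrArg (fun Z ↦ C * Z * C⁻¹) h

theorem outerAut_sq {C : Matrix m m R} (hC : IsUnit C) :
    outerAut C ^ 2 = LinearMap.mulLeftRight R ((C * (Cᵀ)⁻¹)⁻¹, C * (Cᵀ)⁻¹) := by
  have hCT : IsUnit (Cᵀ).det := (isUnit_iff_isUnit_det _).mp ((isUnit_transpose C).mpr hC)
  ext1 X
  rw [sq, Module.End.mul_apply, outerAut_apply, outerAut_apply, LinearMap.mulLeftRight_apply,
    mul_inv_rev, nonsing_inv_nonsing_inv _ hCT]
  simp [transpose_nonsing_inv, mul_assoc]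

end CommRing

end Matrix

theorem stmt9_general (n : ℕ) (C : Matrix (Fin n) (Fin n) ℂ) (hC : IsUnit C) :
    (∃ (ι : Type) (b : Module.Basis ι ℂ (Matrix (Fin n) (Fin n) ℂ)) (μ : ι → ℂ),
        ∀ i, -(C⁻¹ * b i * C)ᵀ = μ i • b i) ↔
      ∃ (S : Matrix (Fin n) (Fin n) ℂ) (D : Fin n → ℂ),
        IsUnit S ∧ C * (Cᵀ)⁻¹ = S * Matrix.diagonal D * S⁻¹ := by
  have hA : IsUnit (C * (Cᵀ)⁻¹) :=
    hC.mul (isUnit_nonsing_inv_iff.mpr ((isUnit_transpose C).mpr hC))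
  rw [← iSup_eigenspace_toLin'_eq_top_iff, ← iSup_eigenspace_mulLeftRight_eq_top_iff hA,
    ← outerAut_sq hC, Module.End.iSup_eigenspace_sq_eq_top_iff _ (outerAut_injective hC)]
  exact Module.End.exists_eigenbasis_iff (outerAut C)

/-- For an invertible n×n complex matrix C, the outer automorphism
    Out_C : X ↦ −(C⁻¹ X C)ᵀ of M_n(ℂ) admits a basis of eigenvectors if and only if
    the matrix C·(Cᵀ)⁻¹ is diagonalizable. -/
theorem stmt9 (n : ℕ) (hn : 1 ≤ n) (C : Matrix (Fin n) (Fin n) ℂ) (hC : IsUnit C) :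
    (∃ (ι : Type) (b : Module.Basis ι ℂ (Matrix (Fin n) (Fin n) ℂ)) (μ : ι → ℂ),
        ∀ i, -(C⁻¹ * b i * C)ᵀ = μ i • b i) ↔
      ∃ (S : Matrix (Fin n) (Fin n) ℂ) (D : Fin n → ℂ),
        IsUnit S ∧ C * (Cᵀ)⁻¹ = S * Matrix.diagonal D * S⁻¹ :=
  stmt9_general n C hC
end

section
/- Let n ≥ 1 and let A, C be invertible n×n complex matrices. The maps Ad_A : X ↦ A⁻¹ X A and Out_C : X ↦ −(C⁻¹ X C)ᵀ commute, i.e. Out_C(Ad_A X) = Ad_A(Out_C X) for every n×n complex matrix X, if and only if there exists a nonzero scalar r ∈ ℂ with A · C · Aᵀ = r · C. -/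
/-!
Transposing and clearing the invertible factors, the relation `Out_C (Ad_A X) = Ad_A (Out_C X)`
says exactly that `X` commutes with `M = A C Aᵀ C⁻¹`. The centre of the matrix algebra consists
of the scalar matrices, so this holds for all `X` iff `M = r • 1`, i.e. `A C Aᵀ = r • C`; and
`r ≠ 0` because `A C Aᵀ` is invertible.
-/

open Matrix

theorem Units.inv_mul_mul_eq_mul_mul_inv_iff {M : Type*} [Monoid M] (a b : Mˣ) (x : M) :
    ↑a⁻¹ * x * a = b * x * ↑b⁻¹ ↔ x * (a * b) = a * b * x := by
  rw [Units.eq_mul_inv_iff_mul_eq]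
  simp only [mul_assoc]
  rw [Units.inv_mul_eq_iff_eq_mul]

namespace Matrix

variable {n K : Type*} [Fintype n] [DecidableEq n] [CommRing K]

theorem inv_mul_mul_eq_mul_mul_inv_iff {P Q : Matrix n n K} (hP : IsUnit P) (hQ : IsUnit Q)
    (X : Matrix n n K) : P⁻¹ * X * P = Q * X * Q⁻¹ ↔ X * (P * Q) = P * Q * X := by
  obtain ⟨p, rfl⟩ := hP
  obtain ⟨q, rfl⟩ := hQ
  rw [← coe_units_inv, ← coe_units_inv]
  exact Units.inv_mul_mul_eq_mul_mul_inv_iff p q X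

theorem neg_transpose_conj_comm_iff {A C : Matrix n n K} (hA : IsUnit A) (hC : IsUnit C)
    (X : Matrix n n K) :
    -(C⁻¹ * (A⁻¹ * X * A) * C)ᵀ = A⁻¹ * (-(C⁻¹ * X * C)ᵀ) * A ↔
      X * (A * C * Aᵀ * C⁻¹) = A * C * Aᵀ * C⁻¹ * X := by
  have hAtC : IsUnit (Aᵀ * C⁻¹) :=
    ((isUnit_transpose A).mpr hA).mul (isUnit_nonsing_inv_iff.mpr hC)
  rw [mul_neg, neg_mul, neg_inj, ← transpose_inj]
  simp only [transpose_mul, transpose_transpose, transpose_nonsing_inv]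
  convert inv_mul_mul_eq_mul_mul_inv_iff (hA.mul hC) hAtC X using 2 <;>
    simp only [Matrix.mul_inv_rev, nonsing_inv_nonsing_inv _ ((isUnit_iff_isUnit_det C).mp hC),
      mul_assoc]

theorem mul_nonsing_inv_eq_scalar_iff {B C : Matrix n n K} (hC : IsUnit C) (r : K) :
    B * C⁻¹ = scalar n r ↔ B = r • C := by
  obtain ⟨c, rfl⟩ := hC
  rw [← coe_units_inv, Units.mul_inv_eq_iff_eq_mul, scalar_apply, ← smul_eq_diagonal_mul]

theorem exists_ne_zero_eq_smul_of_isUnit [Nontrivial K] {B C : Matrix n n K} (hB : IsUnit B)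
    {r : K} (h : B = r • C) : ∃ s : K, s ≠ 0 ∧ B = s • C := by
  cases isEmpty_or_nonempty n
  · exact ⟨1, one_ne_zero, Subsingleton.elim _ _⟩
  · refine ⟨r, ?_, h⟩
    rintro rfl
    exact not_isUnit_zero (zero_smul K C ▸ h ▸ hB)

end Matrix

theorem stmt10_general (n : ℕ) (A C : Matrix (Fin n) (Fin n) ℂ)
    (hA : IsUnit A) (hC : IsUnit C) :
    (∀ X : Matrix (Fin n) (Fin n) ℂ,
        -(C⁻¹ * (A⁻¹ * X * A) * C)ᵀ = A⁻¹ * (-(C⁻¹ * X * C)ᵀ) * A) ↔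
      ∃ r : ℂ, r ≠ 0 ∧ A * C * Aᵀ = r • C := by
  rw [forall_congr' (neg_transpose_conj_comm_iff hA hC), ← Semigroup.mem_center_iff,
    center_eq_range]
  constructor
  · rintro ⟨r, hr⟩
    have hACAt : IsUnit (A * C * Aᵀ) := (hA.mul hC).mul ((isUnit_transpose A).mpr hA)
    exact exists_ne_zero_eq_smul_of_isUnit hACAt ((mul_nonsing_inv_eq_scalar_iff hC r).mp hr.symm)
  · rintro ⟨r, -, hr⟩
    exact ⟨r, ((mul_nonsing_inv_eq_scalar_iff hC r).mpr hr).symm⟩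

/-- For invertible n×n complex matrices A and C, the maps Ad_A : X ↦ A⁻¹ X A and
    Out_C : X ↦ −(C⁻¹ X C)ᵀ commute if and only if there exists a nonzero r ∈ ℂ with
    A·C·Aᵀ = r·C. -/
theorem stmt10 (n : ℕ) (hn : 1 ≤ n) (A C : Matrix (Fin n) (Fin n) ℂ)
    (hA : IsUnit A) (hC : IsUnit C) :
    (∀ X : Matrix (Fin n) (Fin n) ℂ,
        -(C⁻¹ * (A⁻¹ * X * A) * C)ᵀ = A⁻¹ * (-(C⁻¹ * X * C)ᵀ) * A) ↔
      ∃ r : ℂ, r ≠ 0 ∧ A * C * Aᵀ = r • C :=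
  stmt10_general n A C hA hC
end

section
/- Let N = (ℤ_3 × ℤ_3) \ {(0,0)} and consider the action of H₃ on 3-element subsets T ⊆ N induced by the right action v ↦ vA on row vectors. Restrict to those 3-element subsets T ⊆ N whose element sum is nonzero, Σ_{v∈T} v ≠ (0,0). Then: (a) every such T lies in the H₃-orbit of T₁ = {(0,1),(0,2),(1,0)} or in the H₃-orbit of T₂ = {(0,1),(1,0),(1,1)}; (b) T₁ and T₂ lie in different H₃-orbits; and (c) each of these two orbits contains exactly 24 subsets. -/
/-!
Every `A ∈ H₃` is invertible, so `v ↦ vA` is an injective linear map. Hence `H₃` preserves the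
admissible sets `T` (three elements, not containing `0`, nonzero sum) as well as the property of
containing a pair `v, -v`. `T₁` has such a pair and `T₂` does not, so their orbits are disjoint.
Each orbit has 24 elements, and there are exactly 48 admissible sets: of the 56 three-element
subsets of `N`, those with zero sum are the 8 affine lines missing the origin. Hence the two orbits
exhaust the admissible sets.
-/

/-- H₃: 2×2 matrices over ℤ₃ with determinant 1 or −1. -/
def H3 : Set (Matrix (Fin 2) (Fin 2) (ZMod 3)) :=
  {A | A.det = 1 ∨ A.det = -1}

/-- The right action of a 2×2 matrix A on a row vector v ∈ ℤ₃ × ℤ₃, v ↦ vA. -/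
def actv (A : Matrix (Fin 2) (Fin 2) (ZMod 3)) (v : ZMod 3 × ZMod 3) : ZMod 3 × ZMod 3 :=
  (v.1 * A 0 0 + v.2 * A 1 0, v.1 * A 0 1 + v.2 * A 1 1)

/-- T′ lies in the H₃-orbit of T (elementwise action on subsets). -/
def sameOrbit (T T' : Finset (ZMod 3 × ZMod 3)) : Prop :=
  ∃ A ∈ H3, T.image (actv A) = T'

abbrev V3 := ZMod 3 × ZMod 3

section Linear

variable (A : Matrix (Fin 2) (Fin 2) (ZMod 3))

def actvAddHom : V3 →+ V3 :=
  AddMonoidHom.mk' (actv A) fun u v => by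
    simp only [actv, Prod.fst_add, Prod.snd_add, Prod.mk_add_mk]
    congr 1 <;> ring

@[simp]
lemma actvAddHom_apply (v : V3) : actvAddHom A v = actv A v := rfl

lemma actv_neg (v : V3) : actv A (-v) = -actv A v := map_neg (actvAddHom A) v

lemma actv_sum (T : Finset V3) : ∑ v ∈ T, actv A v = actv A (∑ v ∈ T, v) :=
  (map_sum (actvAddHom A) id T).symm

lemma actv_zero : actv A 0 = 0 := map_zero (actvAddHom A)

lemma actv_injective_of_det_ne_zero (hA : A.det ≠ 0) : Function.Injective (actv A) := by
  change Function.Injective (actvAddHom A)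
  rw [injective_iff_map_eq_zero]
  rintro ⟨x, y⟩ hv
  simp only [actvAddHom_apply, actv, Prod.mk_eq_zero] at hv
  rw [Matrix.det_fin_two] at hA
  have hx : x * (A 0 0 * A 1 1 - A 0 1 * A 1 0) = 0 := by
    linear_combination A 1 1 * hv.1 - A 1 0 * hv.2
  have hy : y * (A 0 0 * A 1 1 - A 0 1 * A 1 0) = 0 := by
    linear_combination A 0 0 * hv.2 - A 0 1 * hv.1
  exact Prod.ext (by simpa [hA] using hx) (by simpa [hA] using hy)

end Linear

lemma det_ne_zero_of_mem_H3 {A : Matrix (Fin 2) (Fin 2) (ZMod 3)} (hA : A ∈ H3) : A.det ≠ 0 := by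
  rcases hA with h | h <;> rw [h] <;> decide

lemma actv_injective_of_mem_H3 {A : Matrix (Fin 2) (Fin 2) (ZMod 3)} (hA : A ∈ H3) :
    Function.Injective (actv A) :=
  actv_injective_of_det_ne_zero A (det_ne_zero_of_mem_H3 hA)

instance (A : Matrix (Fin 2) (Fin 2) (ZMod 3)) : Decidable (A ∈ H3) :=
  decidable_of_iff (A 0 0 * A 1 1 - A 0 1 * A 1 0 = 1 ∨ A 0 0 * A 1 1 - A 0 1 * A 1 0 = -1)
    (by rw [H3, Set.mem_ofPred_eq, Matrix.det_fin_two])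

def h3Orbit (T₀ : Finset V3) : Finset (Finset V3) :=
  (Finset.univ.filter (· ∈ H3)).image fun A => T₀.image (actv A)

lemma mem_h3Orbit {T₀ T : Finset V3} : T ∈ h3Orbit T₀ ↔ sameOrbit T₀ T := by
  simp [h3Orbit, sameOrbit]

lemma ncard_sameOrbit (T₀ : Finset V3) : {T | sameOrbit T₀ T}.ncard = (h3Orbit T₀).card := by
  rw [← Set.ncard_coe_finset]
  congr 1
  ext T
  exact mem_h3Orbit.symm

def IsAdmissible (T : Finset V3) : Prop :=
  T.card = 3 ∧ 0 ∉ T ∧ ∑ v ∈ T, v ≠ 0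

instance : DecidablePred IsAdmissible := fun _ => inferInstanceAs (Decidable (_ ∧ _))

lemma IsAdmissible.image {T : Finset V3} (hT : IsAdmissible T) {A : Matrix (Fin 2) (Fin 2) (ZMod 3)}
    (hA : A ∈ H3) : IsAdmissible (T.image (actv A)) := by
  obtain ⟨hcard, hzero, hsum⟩ := hT
  have hinj := actv_injective_of_mem_H3 hA
  refine ⟨by rwa [Finset.card_image_of_injective _ hinj], ?_, ?_⟩
  · rw [Finset.mem_image]
    rintro ⟨v, hv, hAv⟩
    exact hzero (hinj (hAv.trans (actv_zero A).symm) ▸ hv)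
  · rw [Finset.sum_image hinj.injOn, actv_sum, ← actv_zero A]
    exact hinj.ne hsum

lemma card_filter_isAdmissible : (Finset.univ.filter IsAdmissible).card = 48 := by
  decide

def HasAntipodalPair (T : Finset V3) : Prop :=
  ∃ v ∈ T, -v ∈ T

instance : DecidablePred HasAntipodalPair := fun _ => inferInstanceAs (Decidable (∃ _ ∈ _, _))

lemma HasAntipodalPair.image {T : Finset V3} (hT : HasAntipodalPair T)
    (A : Matrix (Fin 2) (Fin 2) (ZMod 3)) : HasAntipodalPair (T.image (actv A)) := by
  obtain ⟨v, hv, hnv⟩ := hT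
  exact ⟨actv A v, Finset.mem_image_of_mem _ hv, actv_neg A v ▸ Finset.mem_image_of_mem _ hnv⟩

lemma HasAntipodalPair.of_image {T : Finset V3} {A : Matrix (Fin 2) (Fin 2) (ZMod 3)}
    (hinj : Function.Injective (actv A)) (hT : HasAntipodalPair (T.image (actv A))) :
    HasAntipodalPair T := by
  obtain ⟨u, hu, hnu⟩ := hT
  obtain ⟨v, hv, rfl⟩ := Finset.mem_image.mp hu
  obtain ⟨w, hw, hAw⟩ := Finset.mem_image.mp hnu
  rw [← actv_neg] at hAw
  exact ⟨v, hv, hinj hAw ▸ hw⟩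

lemma disjoint_h3Orbit {T₁ T₂ : Finset V3} (h₁ : HasAntipodalPair T₁) (h₂ : ¬HasAntipodalPair T₂) :
    Disjoint (h3Orbit T₁) (h3Orbit T₂) := by
  rw [Finset.disjoint_left]
  intro T hT₁ hT₂
  obtain ⟨A, -, rfl⟩ := mem_h3Orbit.mp hT₁
  obtain ⟨B, hB, hBT⟩ := mem_h3Orbit.mp hT₂
  exact h₂ (.of_image (actv_injective_of_mem_H3 hB) (hBT ▸ h₁.image A))

lemma one_mem_H3 : (1 : Matrix (Fin 2) (Fin 2) (ZMod 3)) ∈ H3 := by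
  simp [H3]

lemma self_mem_h3Orbit (T : Finset V3) : T ∈ h3Orbit T :=
  mem_h3Orbit.mpr ⟨1, one_mem_H3, by ext v; simp [actv]⟩

lemma h3Orbit_subset_filter_isAdmissible {T₀ : Finset V3} (hT₀ : IsAdmissible T₀) :
    h3Orbit T₀ ⊆ Finset.univ.filter IsAdmissible := by
  intro T hT
  obtain ⟨A, hA, rfl⟩ := mem_h3Orbit.mp hT
  simpa using hT₀.image hA

/-- (a) every 3-element subset of (ℤ₃×ℤ₃) \ {(0,0)} with nonzero element sum lies in the
    H₃-orbit of T₁ = {(0,1),(0,2),(1,0)} or of T₂ = {(0,1),(1,0),(1,1)};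
    (b) T₁ and T₂ lie in different H₃-orbits;
    (c) each of these two orbits contains exactly 24 subsets. -/
theorem stmt12 :
    (∀ T : Finset (ZMod 3 × ZMod 3), T.card = 3 → ((0 : ZMod 3), (0 : ZMod 3)) ∉ T →
      (∑ v ∈ T, v) ≠ 0 →
      sameOrbit ({((0 : ZMod 3), (1 : ZMod 3)), (0, 2), (1, 0)} : Finset (ZMod 3 × ZMod 3)) T ∨
      sameOrbit ({((0 : ZMod 3), (1 : ZMod 3)), (1, 0), (1, 1)} : Finset (ZMod 3 × ZMod 3)) T) ∧
    ¬ sameOrbit ({((0 : ZMod 3), (1 : ZMod 3)), (0, 2), (1, 0)} : Finset (ZMod 3 × ZMod 3))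
        ({((0 : ZMod 3), (1 : ZMod 3)), (1, 0), (1, 1)} : Finset (ZMod 3 × ZMod 3)) ∧
    Set.ncard {T : Finset (ZMod 3 × ZMod 3) |
        sameOrbit ({((0 : ZMod 3), (1 : ZMod 3)), (0, 2), (1, 0)} : Finset (ZMod 3 × ZMod 3)) T}
      = 24 ∧
    Set.ncard {T : Finset (ZMod 3 × ZMod 3) |
        sameOrbit ({((0 : ZMod 3), (1 : ZMod 3)), (1, 0), (1, 1)} : Finset (ZMod 3 × ZMod 3)) T}
      = 24 := by
  set T₁ : Finset V3 := {(0, 1), (0, 2), (1, 0)}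
  set T₂ : Finset V3 := {(0, 1), (1, 0), (1, 1)}
  have h₁ : HasAntipodalPair T₁ := by decide
  have h₂ : ¬HasAntipodalPair T₂ := by decide
  have hcard₁ : (h3Orbit T₁).card = 24 := by decide
  have hcard₂ : (h3Orbit T₂).card = 24 := by decide
  have hdisj := disjoint_h3Orbit h₁ h₂
  have hcover : Finset.univ.filter IsAdmissible = h3Orbit T₁ ∪ h3Orbit T₂ := by
    refine (Finset.eq_of_subset_of_card_le (Finset.union_subset ?_ ?_) ?_).symm
    · exact h3Orbit_subset_filter_isAdmissible (by decide)
    · exact h3Orbit_subset_filter_isAdmissible (by decide)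
    · rw [card_filter_isAdmissible, Finset.card_union_of_disjoint hdisj, hcard₁, hcard₂]
  refine ⟨fun T hcard hzero hsum => ?_, ?_, by rw [ncard_sameOrbit, hcard₁],
    by rw [ncard_sameOrbit, hcard₂]⟩
  · have hT : T ∈ Finset.univ.filter IsAdmissible := by simpa using ⟨hcard, hzero, hsum⟩
    rw [hcover, Finset.mem_union, mem_h3Orbit, mem_h3Orbit] at hT
    exact hT
  · exact fun h => Finset.disjoint_left.mp hdisj (mem_h3Orbit.mpr h) (self_mem_h3Orbit T₂)
end

section
/- Let ε be a solution of the contraction system for the Pauli grading of sl(n,ℂ), and let a : ℤ_n × ℤ_n → ℂ be any function with a(u) ≠ 0 for all u. Then the function ε̃ defined by ε̃(u,v) = a(u) · a(v) · a(u+v)⁻¹ · ε(u,v) is also a solution of the contraction system for the Pauli grading of sl(n,ℂ). -/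
open Matrix

/-- A symmetric function ε is a solution of the contraction system for the Pauli grading
    of sl(n,ℂ): for all i, j, k ∈ (ℤ_n × ℤ_n) \ {(0,0)} the (rewritten) Jacobi identity
    for the deformed bracket [X_u, X_v]_ε = ε(u,v)·⁅X_u, X_v⁆ holds. -/
def IsPauliSol (n : ℕ) (ε : (ZMod n × ZMod n) × (ZMod n × ZMod n) → ℂ) : Prop :=
  (∀ u v, ε (u, v) = ε (v, u)) ∧
    ∀ i j k : ZMod n × ZMod n, i ≠ (0, 0) → j ≠ (0, 0) → k ≠ (0, 0) →
      (ε (i, j + k) * ε (j, k)) • ⁅Xm n i, ⁅Xm n j, Xm n k⁆⁆ +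
        (ε (k, i + j) * ε (i, j)) • ⁅Xm n k, ⁅Xm n i, Xm n j⁆⁆ +
        (ε (j, k + i) * ε (k, i)) • ⁅Xm n j, ⁅Xm n k, Xm n i⁆⁆ = 0

/-! Rescaling the basis `X_u ↦ a(u) X_u` changes the structure constants by
`ε(u,v) ↦ a(u) a(v) a(u+v)⁻¹ ε(u,v)`. In each of the three terms of the contraction
system the factors `a(j+k)`, `a(i+j)`, `a(k+i)` of the inner bracket cancel, so every term
acquires the same factor `a(i) a(j) a(k) a(i+j+k)⁻¹`, and the identity is just multiplied
by it; the matrices `X_u` play no role. -/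

section GaugeTransform

variable {G K M : Type*} [AddCommGroup G] [Field K] [AddCommGroup M] [Module K M]

def gaugeTransform (a : G → K) (ε : G × G → K) : G × G → K :=
  fun p => a p.1 * a p.2 * (a (p.1 + p.2))⁻¹ * ε p

variable {a : G → K} {ε : G × G → K}

theorem gaugeTransform_symm (hε : ∀ u v, ε (u, v) = ε (v, u)) (u v : G) :
    gaugeTransform a ε (u, v) = gaugeTransform a ε (v, u) := by
  simp only [gaugeTransform, hε u v, add_comm u v]
  ring

theorem gaugeTransform_mul_gaugeTransform {i j k : G} (h : a (j + k) ≠ 0) :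
    gaugeTransform a ε (i, j + k) * gaugeTransform a ε (j, k) =
      a i * a j * a k * (a (i + (j + k)))⁻¹ * (ε (i, j + k) * ε (j, k)) := by
  simp only [gaugeTransform]
  field_simp

theorem gaugeTransform_cyclic_sum (ha : ∀ u, a u ≠ 0) (i j k : G) (A B C : M) :
    (gaugeTransform a ε (i, j + k) * gaugeTransform a ε (j, k)) • A +
        (gaugeTransform a ε (k, i + j) * gaugeTransform a ε (i, j)) • B +
        (gaugeTransform a ε (j, k + i) * gaugeTransform a ε (k, i)) • C =
      (a i * a j * a k * (a (i + (j + k)))⁻¹) •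
        ((ε (i, j + k) * ε (j, k)) • A + (ε (k, i + j) * ε (i, j)) • B +
          (ε (j, k + i) * ε (k, i)) • C) := by
  have hkij : k + (i + j) = i + (j + k) := by abel
  have hjki : j + (k + i) = i + (j + k) := by abel
  rw [gaugeTransform_mul_gaugeTransform (ha _), gaugeTransform_mul_gaugeTransform (ha _),
    gaugeTransform_mul_gaugeTransform (ha _), hkij, hjki]
  simp only [smul_add, smul_smul]
  congr 3 <;> ring

end GaugeTransform

theorem stmt15_general (n : ℕ) (ε : (ZMod n × ZMod n) × (ZMod n × ZMod n) → ℂ)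
    (hε : IsPauliSol n ε) (a : ZMod n × ZMod n → ℂ) (ha : ∀ u, a u ≠ 0) :
    IsPauliSol n (fun p => a p.1 * a p.2 * (a (p.1 + p.2))⁻¹ * ε p) := by
  show IsPauliSol n (gaugeTransform a ε)
  refine ⟨gaugeTransform_symm hε.1, fun i j k hi hj hk => ?_⟩
  rw [gaugeTransform_cyclic_sum ha, hε.2 i j k hi hj hk, smul_zero]

/-- If ε is a solution of the contraction system for the Pauli grading of sl(n,ℂ) and
    a : ℤ_n × ℤ_n → ℂ is nowhere zero, then ε̃(u,v) = a(u)·a(v)·a(u+v)⁻¹·ε(u,v) is again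
    a solution. -/
theorem stmt15 (n : ℕ) (hn : 1 ≤ n) (ε : (ZMod n × ZMod n) × (ZMod n × ZMod n) → ℂ)
    (hε : IsPauliSol n ε) (a : ZMod n × ZMod n → ℂ) (ha : ∀ u, a u ≠ 0) :
    IsPauliSol n (fun p => a p.1 * a p.2 * (a (p.1 + p.2))⁻¹ * ε p) :=
  stmt15_general n ε hε a ha
end
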